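/- arXiv:2403.18748 — 5 statements merged into one kernel-verified Lean document; each statement's English description precedes it below -/
import Mathlib

section
/- Let A be an injective bounded linear operator on a complex Hilbert space H whose point spectrum σ_p(A) is nonempty, and suppose the set of eigenvectors of A spans a dense subspace of H. Then every extended eigenvalue λ of A can be written as λ = α/β for some eigenvalues α, β ∈ σ_p(A). -/
/-! If `A X = λ X A` and `A x = μ x`, then `A (X x) = λ μ (X x)`, so `X x` is an eigenvector for
`λ μ` as soon as it is nonzero. Since `X ≠ 0` and the eigenvectors span a dense subspace, `X` cannot
kill every eigenvector; and `μ ≠ 0` by injectivity, so `λ = (λ μ) / μ`. -/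

def extEig {H : Type*} [NormedAddCommGroup H] [NormedSpace ℂ H]
    (A : H →L[ℂ] H) (l : ℂ) : Prop :=
  ∃ X : H →L[ℂ] H, X ≠ 0 ∧ A.comp X = l • (X.comp A)

section

variable {𝕜 H : Type*} [NontriviallyNormedField 𝕜] [NormedAddCommGroup H] [NormedSpace 𝕜 H]

theorem apply_eq_mul_smul_of_comp_eq_smul_comp {A X : H →L[𝕜] H} {l μ : 𝕜} {x : H}
    (hAX : A.comp X = l • X.comp A) (hx : A x = μ • x) : A (X x) = (l * μ) • X x := by
  have := DFunLike.congr_fun hAX x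
  simp only [ContinuousLinearMap.comp_apply, smul_apply, hx, map_smul] at this
  rw [this, smul_smul]

theorem eigenvalue_ne_zero_of_injective {A : H →L[𝕜] H} (hA : Function.Injective A) {μ : 𝕜}
    {x : H} (hx0 : x ≠ 0) (hx : A x = μ • x) : μ ≠ 0 := by
  rintro rfl
  exact hx0 (hA (by rw [hx, zero_smul, map_zero]))

theorem exists_apply_ne_zero_of_dense_span {X : H →L[𝕜] H} (hX : X ≠ 0) {s : Set H}
    (hs : Dense (Submodule.span 𝕜 s : Set H)) : ∃ x ∈ s, X x ≠ 0 := by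
  by_contra! h
  exact hX (ContinuousLinearMap.ext_on hs h)

end

theorem stmt4_general {H : Type*} [NormedAddCommGroup H] [InnerProductSpace ℂ H]
    (A : H →L[ℂ] H) (hinj : Function.Injective A)
    (hdense : Dense (↑(Submodule.span ℂ {x : H | x ≠ 0 ∧ ∃ μ : ℂ, A x = μ • x}) : Set H)) :
    ∀ l : ℂ, extEig A l →
      ∃ a b : ℂ, (∃ x : H, x ≠ 0 ∧ A x = a • x) ∧ (∃ x : H, x ≠ 0 ∧ A x = b • x) ∧
        l = a / b := by
  rintro l ⟨X, hX0, hAX⟩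
  obtain ⟨x, ⟨hx0, μ, hx⟩, hXx⟩ := exists_apply_ne_zero_of_dense_span hX0 hdense
  have hμ := eigenvalue_ne_zero_of_injective hinj hx0 hx
  refine ⟨l * μ, μ, ⟨X x, hXx, apply_eq_mul_smul_of_comp_eq_smul_comp hAX hx⟩, ⟨x, hx0, hx⟩, ?_⟩
  field_simp

theorem stmt4 {H : Type*} [NormedAddCommGroup H] [InnerProductSpace ℂ H] [CompleteSpace H]
    (A : H →L[ℂ] H) (hinj : Function.Injective A)
    (hne : ∃ μ : ℂ, ∃ x : H, x ≠ 0 ∧ A x = μ • x)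
    (hdense : Dense (↑(Submodule.span ℂ {x : H | x ≠ 0 ∧ ∃ μ : ℂ, A x = μ • x}) : Set H)) :
    ∀ l : ℂ, extEig A l →
      ∃ a b : ℂ, (∃ x : H, x ≠ 0 ∧ A x = a • x) ∧ (∃ x : H, x ≠ 0 ∧ A x = b • x) ∧
        l = a / b :=
  stmt4_general A hinj hdense
end

section
/- Let φ(z) = w z + b with 0 < |w| < 1 and b ∈ ℂ, inducing a bounded composition operator C_φ on the Fock space F²_α. The point spectrum of C_φ is { w^n : n ∈ ℕ₀ }, each eigenvalue has multiplicity one, and an eigenfunction for w^n is h(z)^n where h(z) = z − b/(1−w) (the fixed point translate), satisfying C_φ h^n = w^n h^n. -/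
/-!
The translate `h(z) = z - c` of the fixed point `c = b / (1 - w)` satisfies `h ∘ φ = w • h`, so
`C_φ hⁿ = wⁿ hⁿ`, and `hⁿ` lies in the Fock space because a polynomial is integrable against a
Gaussian. Conversely, if `f ∘ φ = μ f` with `f` entire, differentiating `m` times at the fixed
point gives `wᵐ f⁽ᵐ⁾(c) = μ f⁽ᵐ⁾(c)`. Since `0 < |w| < 1`, the powers `wᵐ` are pairwise distinct,
so at most one Taylor coefficient of `f` at `c` survives: either `f = 0`, or `μ = wⁿ` and `f` is a
multiple of `hⁿ`.
-/

open MeasureTheory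

def FockSpace (α : ℝ) : Set (ℂ → ℂ) :=
  {f | Differentiable ℂ f ∧
    Integrable (fun z : ℂ => ‖f z‖ ^ 2 * Real.exp (-α * ‖z‖ ^ 2))}

theorem pow_right_injective_of_norm_ne_one {𝕜 : Type*} [NormedDivisionRing 𝕜] {w : 𝕜}
    (hw0 : w ≠ 0) (hw1 : ‖w‖ ≠ 1) : Function.Injective (w ^ · : ℕ → 𝕜) :=
  fun m n h => pow_right_injective₀ (norm_pos_iff.mpr hw0) hw1 (by simpa using congrArg norm h)

/-- `tᵏ ≤ k! eᵗ` absorbs the monomial, and `‖v‖ ≤ (a/2)‖v‖² + 1/(2a)` absorbs `eᵗ` into half of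
the Gaussian. -/
theorem norm_sub_pow_mul_exp_le {E : Type*} [SeminormedAddCommGroup E] {a : ℝ} (ha : 0 < a)
    (c v : E) (k : ℕ) :
    ‖v - c‖ ^ k * Real.exp (-a * ‖v‖ ^ 2) ≤
      k.factorial * Real.exp (‖c‖ + 1 / (2 * a)) * Real.exp (-(a / 2) * ‖v‖ ^ 2) := by
  have h_pow : ‖v - c‖ ^ k ≤ k.factorial * Real.exp ‖v - c‖ := by
    have := Real.pow_div_factorial_le_exp ‖v - c‖ (norm_nonneg _) k
    rwa [div_le_iff₀ (by positivity), mul_comm] at this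
  have h_quad : ‖v‖ ≤ a / 2 * ‖v‖ ^ 2 + 1 / (2 * a) := by
    have : a / 2 * ‖v‖ ^ 2 + 1 / (2 * a) - ‖v‖ = (a * ‖v‖ - 1) ^ 2 / (2 * a) := by
      field_simp; ring
    nlinarith [div_nonneg (sq_nonneg (a * ‖v‖ - 1)) (by positivity : (0 : ℝ) ≤ 2 * a)]
  calc ‖v - c‖ ^ k * Real.exp (-a * ‖v‖ ^ 2)
      ≤ k.factorial * Real.exp (‖v‖ + ‖c‖) * Real.exp (-a * ‖v‖ ^ 2) := by
        gcongr
        exact h_pow.trans (by gcongr; exact norm_sub_le v c)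
    _ ≤ k.factorial * Real.exp (‖c‖ + 1 / (2 * a)) * Real.exp (-(a / 2) * ‖v‖ ^ 2) := by
        rw [mul_assoc, mul_assoc, ← Real.exp_add, ← Real.exp_add]
        gcongr _ * Real.exp ?_
        linarith

section GaussianMoments

variable {V : Type*} [NormedAddCommGroup V] [InnerProductSpace ℝ V] [FiniteDimensional ℝ V]
  [MeasurableSpace V] [BorelSpace V]

theorem integrable_exp_neg_mul_sq_norm {a : ℝ} (ha : 0 < a) :
    Integrable fun v : V => Real.exp (-a * ‖v‖ ^ 2) := by
  refine (GaussianFourier.integrable_cexp_neg_mul_sq_norm_add (V := V)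
    (show 0 < (a : ℂ).re from ha) 0 0).norm.congr (.of_forall fun v => ?_)
  simp [Complex.norm_exp, ← Complex.ofReal_pow, ← Complex.ofReal_mul]

theorem integrable_norm_sub_pow_mul_exp_neg_mul_sq {a : ℝ} (ha : 0 < a) (c : V) (k : ℕ) :
    Integrable fun v : V => ‖v - c‖ ^ k * Real.exp (-a * ‖v‖ ^ 2) := by
  refine ((integrable_exp_neg_mul_sq_norm (half_pos ha)).const_mul
    (k.factorial * Real.exp (‖c‖ + 1 / (2 * a)))).mono' (by fun_prop) (.of_forall fun v => ?_)
  rw [Real.norm_of_nonneg (by positivity)]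
  exact norm_sub_pow_mul_exp_le ha c v k

end GaussianMoments

theorem sub_pow_mem_fockSpace {α : ℝ} (hα : 0 < α) (c : ℂ) (n : ℕ) :
    (fun z : ℂ => (z - c) ^ n) ∈ FockSpace α := by
  refine ⟨(differentiable_id.sub_const c).pow n, ?_⟩
  simpa only [norm_pow, ← pow_mul] using
    integrable_norm_sub_pow_mul_exp_neg_mul_sq hα c (n * 2)

section AffineEigenfunction

variable {w b c μ : ℂ} {H : ℂ → ℂ}

theorem iteratedDeriv_comp_affine (hH : Differentiable ℂ H) (m : ℕ) (z : ℂ) :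
    iteratedDeriv m (fun z => H (w * z + b)) z = w ^ m * iteratedDeriv m H (w * z + b) := by
  have hH' : ContDiff ℂ m fun y => H (y + b) := (hH.comp (differentiable_id.add_const b)).contDiff
  rw [iteratedDeriv_comp_const_mul hH' w, iteratedDeriv_comp_add_const]

theorem iteratedDeriv_eq_zero_of_comp_affine_eq_mul (hH : Differentiable ℂ H)
    (hc : w * c + b = c) (heq : ∀ z, H (w * z + b) = μ * H z) {m : ℕ} (hm : w ^ m ≠ μ) :
    iteratedDeriv m H c = 0 := by
  have h := congrArg (fun f => iteratedDeriv m f c) (funext heq)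
  simp only [iteratedDeriv_comp_affine hH, iteratedDeriv_const_mul_field, hc] at h
  exact (mul_eq_mul_right_iff.mp h).resolve_left hm

theorem eq_mul_sub_pow_of_iteratedDeriv_eq_zero (hH : Differentiable ℂ H) {n : ℕ}
    (hd : ∀ m ≠ n, iteratedDeriv m H c = 0) (z : ℂ) :
    H z = (n.factorial : ℂ)⁻¹ * iteratedDeriv n H c * (z - c) ^ n := by
  rw [← Complex.taylorSeries_eq_of_entire' c z hH, tsum_eq_single n fun m hm => by simp [hd m hm]]

theorem eq_zero_of_comp_affine_eq_mul (hH : Differentiable ℂ H) (hc : w * c + b = c)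
    (heq : ∀ z, H (w * z + b) = μ * H z) (hμ : ∀ n : ℕ, w ^ n ≠ μ) : H = 0 := by
  have hd m := iteratedDeriv_eq_zero_of_comp_affine_eq_mul hH hc heq (hμ m)
  funext z
  simpa [hd 0] using eq_mul_sub_pow_of_iteratedDeriv_eq_zero hH (n := 0) (fun m _ => hd m) z

theorem exists_eq_mul_sub_pow_of_comp_affine_eq_pow_mul (hH : Differentiable ℂ H)
    (hw : Function.Injective (w ^ · : ℕ → ℂ)) (hc : w * c + b = c) {n : ℕ}
    (heq : ∀ z, H (w * z + b) = w ^ n * H z) : ∃ a : ℂ, ∀ z, H z = a * (z - c) ^ n :=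
  ⟨_, eq_mul_sub_pow_of_iteratedDeriv_eq_zero hH fun _ hm =>
    iteratedDeriv_eq_zero_of_comp_affine_eq_mul hH hc heq (hw.ne hm)⟩

end AffineEigenfunction

theorem stmt9_general (α : ℝ) (hα : 0 < α) (w b : ℂ) (hw0 : 0 < ‖w‖) (hw1 : ‖w‖ < 1)
    {F : Type*} [NormedAddCommGroup F] [InnerProductSpace ℂ F]
    (T : F →ₗ[ℂ] (ℂ → ℂ)) (hinj : Function.Injective T)
    (hrange : Set.range T = FockSpace α)
    (Cφ : F →L[ℂ] F) (hCφ : ∀ (f : F) (z : ℂ), T (Cφ f) z = T f (w * z + b)) :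
    (∀ n : ℕ, ∃ en : F, (∀ z : ℂ, T en z = (z - b / (1 - w)) ^ n) ∧
        Cφ en = (w ^ n : ℂ) • en) ∧
    (∀ μ : ℂ, (∃ f : F, f ≠ 0 ∧ Cφ f = μ • f) ↔ ∃ n : ℕ, μ = w ^ n) ∧
    (∀ (μ : ℂ) (f g : F), f ≠ 0 → g ≠ 0 → Cφ f = μ • f → Cφ g = μ • g →
      ∃ c : ℂ, f = c • g) := by
  set c := b / (1 - w)
  have hc : w * c + b = c := by
    have : 1 - w ≠ 0 := sub_ne_zero.mpr fun h => by simp [← h] at hw1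
    simp only [c]; field_simp; ring
  have hw := pow_right_injective_of_norm_ne_one (norm_pos_iff.mp hw0) hw1.ne
  have hdiff f : Differentiable ℂ (T f) := (hrange ▸ Set.mem_range_self f : T f ∈ FockSpace α).1
  have heigen {μ : ℂ} {f : F} (hf : Cφ f = μ • f) z : T f (w * z + b) = μ * T f z := by
    simp [← hCφ, hf]
  have hT0 {f : F} (hf : T f = 0) : f = 0 := hinj (hf.trans (map_zero T).symm)
  have heigenvector n : ∃ en : F, (∀ z, T en z = (z - c) ^ n) ∧ Cφ en = w ^ n • en := by
    obtain ⟨en, hen⟩ : _ ∈ Set.range T := hrange ▸ sub_pow_mem_fockSpace hα c n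
    refine ⟨en, congrFun hen, hinj (funext fun z => ?_)⟩
    simp only [hCφ, hen, map_smul, Pi.smul_apply, smul_eq_mul, ← mul_pow]
    congr 1; linear_combination hc
  have hspectrum {μ : ℂ} {f : F} (hf0 : f ≠ 0) (hf : Cφ f = μ • f) : ∃ n : ℕ, μ = w ^ n := by
    by_contra! h
    exact hf0 (hT0 (eq_zero_of_comp_affine_eq_mul (hdiff f) hc (heigen hf) fun n e => h n e.symm))
  refine ⟨heigenvector, fun μ => ⟨fun ⟨f, hf0, hf⟩ => hspectrum hf0 hf, ?_⟩, ?_⟩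
  · rintro ⟨n, rfl⟩
    obtain ⟨en, hen, hCen⟩ := heigenvector n
    exact ⟨en, fun h => by simpa [h] using hen (c + 1), hCen⟩
  · intro μ f g hf0 hg0 hf hg
    obtain ⟨n, rfl⟩ := hspectrum hf0 hf
    obtain ⟨a, ha⟩ := exists_eq_mul_sub_pow_of_comp_affine_eq_pow_mul (hdiff f) hw hc (heigen hf)
    obtain ⟨a', ha'⟩ := exists_eq_mul_sub_pow_of_comp_affine_eq_pow_mul (hdiff g) hw hc (heigen hg)
    have ha'0 : a' ≠ 0 := by
      rintro rfl
      exact hg0 (hT0 (funext fun z => by simp [ha']))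
    refine ⟨a / a', hinj (funext fun z => ?_)⟩
    simp only [map_smul, Pi.smul_apply, smul_eq_mul, ha, ha']
    field_simp

/-- For `φ(z) = wz + b` with `0 < |w| < 1` on the Fock space: the point
spectrum of `C_φ` is `{wⁿ : n ∈ ℕ}`, each eigenvalue has multiplicity one, and
`h(z)ⁿ = (z - b/(1-w))ⁿ` is an eigenfunction for `wⁿ`. -/
theorem stmt9 (α : ℝ) (hα : 0 < α) (w b : ℂ) (hw0 : 0 < ‖w‖) (hw1 : ‖w‖ < 1)
    {F : Type*} [NormedAddCommGroup F] [InnerProductSpace ℂ F] [CompleteSpace F]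
    (T : F →ₗ[ℂ] (ℂ → ℂ)) (hinj : Function.Injective T)
    (hrange : Set.range T = FockSpace α)
    (hnorm : ∀ f : F, ‖f‖ ^ 2 =
      (α / Real.pi) * ∫ z : ℂ, ‖T f z‖ ^ 2 * Real.exp (-α * ‖z‖ ^ 2))
    (Cφ : F →L[ℂ] F) (hCφ : ∀ (f : F) (z : ℂ), T (Cφ f) z = T f (w * z + b)) :
    (∀ n : ℕ, ∃ en : F, (∀ z : ℂ, T en z = (z - b / (1 - w)) ^ n) ∧
        Cφ en = (w ^ n : ℂ) • en) ∧
    (∀ μ : ℂ, (∃ f : F, f ≠ 0 ∧ Cφ f = μ • f) ↔ ∃ n : ℕ, μ = w ^ n) ∧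
    (∀ (μ : ℂ) (f g : F), f ≠ 0 → g ≠ 0 → Cφ f = μ • f → Cφ g = μ • g →
      ∃ c : ℂ, f = c • g) :=
  stmt9_general α hα w b hw0 hw1 T hinj hrange Cφ hCφ
end

section
/- Let φ(z) = a(z − c) + c be a loxodromic or third-kind hyperbolic nonautomorphic self-map of the unit disk (with c ∈ 𝔻 a fixed point and 0 < |a| < 1, and |a| + |1−a||c| ≤ 1 ensuring φ(𝔻) ⊆ 𝔻). Then the composition operator C_φ on the Bergman space L²_a(𝔻) has point spectrum σ_p(C_φ) = { a^n : n ∈ ℕ₀ }, each eigenvalue of multiplicity one with eigenfunction σ^n where σ(z) = z − c, satisfying C_φ σ^n = a^n σ^n. -/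
open MeasureTheory Metric

/-- The Bergman space `L²_a(𝔻)`: holomorphic functions on the unit disk that
are square-integrable with respect to area measure. -/
def BergmanSpace : Set (ℂ → ℂ) :=
  {f | DifferentiableOn ℂ f (ball 0 1) ∧
    IntegrableOn (fun z : ℂ => ‖f z‖ ^ 2) (ball 0 1)}

/-!
If `f (a * (z - c) + c) = μ * f z`, the Taylor coefficients `pₖ` of `f` at the fixed point `c`
satisfy `aᵏ pₖ = μ pₖ`. As `0 < ‖a‖ < 1`, the powers `aᵏ` are pairwise distinct, so a nonzero
eigenfunction has exactly one nonzero coefficient: `μ = aⁿ` and `f = K (z - c)ⁿ` near `c`, hence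
on the whole disk by the identity theorem. Conversely `(z - c)ⁿ` lies in the Bergman space and,
since `φ` maps the disk into itself, is an eigenfunction for `aⁿ`.
-/

open Set Filter Topology FormalMultilinearSeries

lemma pow_right_injective_of_norm_ne_one_s14 {𝕜 : Type*} [NormedDivisionRing 𝕜] {a : 𝕜}
    (ha0 : 0 < ‖a‖) (ha1 : ‖a‖ ≠ 1) : Function.Injective (a ^ · : ℕ → 𝕜) := fun m n h =>
  pow_right_injective₀ ha0 ha1 (by simpa only [norm_pow] using congrArg norm h)

lemma eq_pow_and_eq_zero_of_pow_mul_eq {M₀ : Type*} [CommMonoidWithZero M₀] [IsCancelMulZero M₀]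
    {a μ : M₀} {u : ℕ → M₀} (ha : Function.Injective (a ^ · : ℕ → M₀))
    (h : ∀ k, a ^ k * u k = μ * u k) {n : ℕ} (hn : u n ≠ 0) : μ = a ^ n ∧ ∀ k ≠ n, u k = 0 := by
  have hμ : μ = a ^ n := (mul_right_cancel₀ hn (h n)).symm
  refine ⟨hμ, fun k hk => by_contra fun hu => hk (ha ?_)⟩
  simpa [hμ] using mul_right_cancel₀ hu (h k)

section PowerSeries

variable {G : ℂ → ℂ} {p : FormalMultilinearSeries ℂ ℂ ℂ} {c : ℂ}

lemma HasFPowerSeriesAt.comp_homothety (hp : HasFPowerSeriesAt G p c) (a : ℂ) :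
    HasFPowerSeriesAt (fun z => G (a * (z - c) + c))
      (ofScalars ℂ fun k => a ^ k * p.coeff k) c := by
  have hscale : Tendsto (a * ·) (𝓝 (0 : ℂ)) (𝓝 0) := by
    simpa using (continuous_const_mul a).tendsto 0
  rw [hasFPowerSeriesAt_iff]
  filter_upwards [hscale.eventually (hasFPowerSeriesAt_iff.1 hp)] with z hz
  simpa [coeff_ofScalars, mul_pow, add_comm c, mul_assoc, mul_left_comm] using hz

lemma HasFPowerSeriesAt.pow_mul_coeff_eq {a μ : ℂ} (hp : HasFPowerSeriesAt G p c)
    (heq : ∀ᶠ z in 𝓝 c, G (a * (z - c) + c) = μ * G z) (k : ℕ) :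
    a ^ k * p.coeff k = μ * p.coeff k := by
  have h := ((hp.comp_homothety a).congr heq).eq_formalMultilinearSeries (hp.const_smul (c := μ))
  have hsmul : (μ • p).coeff k = μ * p.coeff k := rfl
  simpa only [coeff_ofScalars, hsmul] using congrArg (coeff · k) h

end PowerSeries

lemma AnalyticOnNhd.eqOn_const_mul_sub_pow_of_comp_homothety {G : ℂ → ℂ} {U : Set ℂ} {a c μ : ℂ}
    (hG : AnalyticOnNhd ℂ G U) (hU : IsPreconnected U) (hcU : c ∈ U)
    (ha : Function.Injective (a ^ · : ℕ → ℂ))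
    (heq : ∀ᶠ z in 𝓝 c, G (a * (z - c) + c) = μ * G z) (hne : ∃ z ∈ U, G z ≠ 0) :
    ∃ n : ℕ, μ = a ^ n ∧ ∃ K ≠ 0, EqOn G (fun z => K * (z - c) ^ n) U := by
  obtain ⟨p, hp⟩ := hG c hcU
  obtain ⟨n, hn⟩ : ∃ n, p.coeff n ≠ 0 := by
    by_contra! h
    obtain ⟨z, hz, hGz⟩ := hne
    have hp0 : p = 0 := by ext1 n; exact coeff_eq_zero.1 (h n)
    exact hGz (hG.eqOn_zero_of_preconnected_of_eventuallyEq_zero hU hcU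
      (hp0 ▸ hp).eventually_eq_zero hz)
  obtain ⟨hμ, hzero⟩ := eq_pow_and_eq_zero_of_pow_mul_eq ha (hp.pow_mul_coeff_eq heq) hn
  refine ⟨n, hμ, p.coeff n, hn, ?_⟩
  have hmono : G =ᶠ[𝓝 c] fun z => p.coeff n * (z - c) ^ n := by
    filter_upwards [hasFPowerSeriesAt_iff'.1 hp] with z hz
    rw [hz.unique (hasSum_single n fun k hk => by rw [hzero k hk, smul_zero]), smul_eq_mul,
      mul_comm]
  exact hG.eqOn_of_preconnected_of_eventuallyEq
    (fun z _ => (analyticAt_const.mul ((analyticAt_id.sub analyticAt_const).pow n))) hU hcU hmono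

lemma mapsTo_homothety_ball {a c : ℂ} (ha0 : 0 < ‖a‖) (hmap : ‖a‖ + ‖1 - a‖ * ‖c‖ ≤ 1) :
    MapsTo (fun z => a * (z - c) + c) (ball (0 : ℂ) 1) (ball 0 1) := by
  intro z hz
  rw [mem_ball_zero_iff] at hz ⊢
  calc ‖a * (z - c) + c‖ = ‖a * z + (1 - a) * c‖ := by ring_nf
    _ ≤ ‖a‖ * ‖z‖ + ‖1 - a‖ * ‖c‖ := by
      simpa only [norm_mul] using norm_add_le (a * z) ((1 - a) * c)
    _ < ‖a‖ + ‖1 - a‖ * ‖c‖ := by gcongr; exact mul_lt_of_lt_one_right ha0 hz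
    _ ≤ 1 := hmap

lemma sub_pow_mem_bergmanSpace (c : ℂ) (n : ℕ) : (fun z => (z - c) ^ n) ∈ BergmanSpace :=
  ⟨(differentiable_id.sub_const c |>.pow n).differentiableOn,
    ((Continuous.continuousOn (by fun_prop)).integrableOn_compact
      (isCompact_closedBall 0 1)).mono_set ball_subset_closedBall⟩

section CompositionOperator

variable {F : Type*} [AddCommGroup F] [Module ℂ F] {T : F →ₗ[ℂ] ℂ → ℂ} {U : Set ℂ}
  {C : F → F} {a c : ℂ}

lemma eq_pow_smul_of_eqOn_sub_pow (hinj : ∀ f g : F, (∀ z ∈ U, T f z = T g z) → f = g)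
    (hC : ∀ f, ∀ z ∈ U, T (C f) z = T f (a * (z - c) + c))
    (hφ : MapsTo (fun z => a * (z - c) + c) U U) {e : F} {n : ℕ}
    (he : EqOn (T e) (fun z => (z - c) ^ n) U) : C e = a ^ n • e :=
  hinj _ _ fun z hz => by simp [hC e z hz, he hz, he (hφ hz), mul_pow]

lemma ne_zero_of_eqOn_sub_pow (hU : IsOpen U) (hcU : c ∈ U) {e : F} {n : ℕ}
    (he : EqOn (T e) (fun z => (z - c) ^ n) U) : e ≠ 0 := by
  rintro rfl
  have hU' : ∀ᶠ z in 𝓝[≠] c, z ∈ U := nhdsWithin_le_nhds (hU.mem_nhds hcU)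
  obtain ⟨z, hz, hzc⟩ := (hU'.and self_mem_nhdsWithin).exists
  exact hzc (sub_eq_zero.1 (pow_eq_zero_iff'.1 (by simpa using (he hz).symm)).1)

lemma exists_eq_pow_and_eqOn_const_mul_sub_pow (hU : IsOpen U) (hU' : IsPreconnected U)
    (hcU : c ∈ U) (ha : Function.Injective (a ^ · : ℕ → ℂ))
    (hinj : ∀ f g : F, (∀ z ∈ U, T f z = T g z) → f = g)
    (hdiff : ∀ f, DifferentiableOn ℂ (T f) U)
    (hC : ∀ f, ∀ z ∈ U, T (C f) z = T f (a * (z - c) + c)) {f : F} {μ : ℂ}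
    (hf0 : f ≠ 0) (hf : C f = μ • f) :
    ∃ n : ℕ, μ = a ^ n ∧ ∃ K ≠ 0, EqOn (T f) (fun z => K * (z - c) ^ n) U := by
  have heq : ∀ᶠ z in 𝓝 c, T f (a * (z - c) + c) = μ * T f z := by
    filter_upwards [hU.mem_nhds hcU] with z hz
    simp [← hC f z hz, hf]
  have hne : ∃ z ∈ U, T f z ≠ 0 := by
    by_contra! h
    exact hf0 (hinj f 0 fun z hz => by simp [h z hz])
  exact ((hdiff f).analyticOnNhd hU).eqOn_const_mul_sub_pow_of_comp_homothety hU' hcU ha heq hne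

lemma exists_eq_smul_of_eigenvectors (hU : IsOpen U) (hU' : IsPreconnected U)
    (hcU : c ∈ U) (ha : Function.Injective (a ^ · : ℕ → ℂ))
    (hinj : ∀ f g : F, (∀ z ∈ U, T f z = T g z) → f = g)
    (hdiff : ∀ f, DifferentiableOn ℂ (T f) U)
    (hC : ∀ f, ∀ z ∈ U, T (C f) z = T f (a * (z - c) + c)) {f g : F} {μ : ℂ}
    (hf0 : f ≠ 0) (hg0 : g ≠ 0) (hf : C f = μ • f) (hg : C g = μ • g) : ∃ K : ℂ, f = K • g := by
  obtain ⟨n, hμn, Kf, -, hTf⟩ :=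
    exists_eq_pow_and_eqOn_const_mul_sub_pow hU hU' hcU ha hinj hdiff hC hf0 hf
  obtain ⟨m, hμm, Kg, hKg, hTg⟩ :=
    exists_eq_pow_and_eqOn_const_mul_sub_pow hU hU' hcU ha hinj hdiff hC hg0 hg
  obtain rfl : n = m := ha (hμn.symm.trans hμm)
  refine ⟨Kf / Kg, hinj _ _ fun z hz => ?_⟩
  simp only [map_smul, Pi.smul_apply, smul_eq_mul, hTf hz, hTg hz]
  field_simp

end CompositionOperator

theorem stmt14_general (a c : ℂ) (hc : c ∈ ball (0:ℂ) 1) (ha0 : 0 < ‖a‖) (ha1 : ‖a‖ < 1)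
    (hmap : ‖a‖ + ‖1 - a‖ * ‖c‖ ≤ 1)
    {F : Type*} [NormedAddCommGroup F] [InnerProductSpace ℂ F]
    (T : F →ₗ[ℂ] (ℂ → ℂ))
    (hinj : ∀ f g : F, (∀ z ∈ ball (0:ℂ) 1, T f z = T g z) → f = g)
    (hmem : ∀ f : F, T f ∈ BergmanSpace)
    (hsur : ∀ g ∈ BergmanSpace, ∃ f : F, ∀ z ∈ ball (0:ℂ) 1, T f z = g z)
    (Cφ : F →L[ℂ] F)
    (hCφ : ∀ (f : F), ∀ z ∈ ball (0:ℂ) 1, T (Cφ f) z = T f (a * (z - c) + c)) :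
    (∀ n : ℕ, ∃ en : F, (∀ z ∈ ball (0:ℂ) 1, T en z = (z - c) ^ n) ∧
        Cφ en = (a ^ n : ℂ) • en) ∧
    (∀ μ : ℂ, (∃ f : F, f ≠ 0 ∧ Cφ f = μ • f) ↔ ∃ n : ℕ, μ = a ^ n) ∧
    (∀ (μ : ℂ) (f g : F), f ≠ 0 → g ≠ 0 → Cφ f = μ • f → Cφ g = μ • g →
      ∃ cst : ℂ, f = cst • g) := by
  have ha := pow_right_injective_of_norm_ne_one_s14 ha0 ha1.ne
  have hdiff : ∀ f, DifferentiableOn ℂ (T f) (ball 0 1) := fun f => (hmem f).1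
  have hU : IsPreconnected (ball (0 : ℂ) 1) := (convex_ball 0 1).isPreconnected
  have heigen : ∀ n : ℕ, ∃ en : F, (∀ z ∈ ball (0:ℂ) 1, T en z = (z - c) ^ n) ∧
      Cφ en = (a ^ n : ℂ) • en := fun n => by
    obtain ⟨en, hen⟩ := hsur _ (sub_pow_mem_bergmanSpace c n)
    exact ⟨en, hen, eq_pow_smul_of_eqOn_sub_pow hinj hCφ (mapsTo_homothety_ball ha0 hmap) hen⟩
  refine ⟨heigen, fun μ => ⟨fun ⟨f, hf0, hf⟩ => ?_, ?_⟩, fun μ f g hf0 hg0 hf hg => ?_⟩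
  · obtain ⟨n, hμ, -⟩ :=
      exists_eq_pow_and_eqOn_const_mul_sub_pow isOpen_ball hU hc ha hinj hdiff hCφ hf0 hf
    exact ⟨n, hμ⟩
  · rintro ⟨n, rfl⟩
    obtain ⟨en, hen, heig⟩ := heigen n
    exact ⟨en, ne_zero_of_eqOn_sub_pow isOpen_ball hc hen, heig⟩
  · exact exists_eq_smul_of_eigenvectors isOpen_ball hU hc ha hinj hdiff hCφ hf0 hg0 hf hg

/-- For a loxodromic or third-kind hyperbolic nonautomorphic map
`φ(z) = a(z - c) + c` of the disk, the point spectrum of `C_φ` on the Bergman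
space is `{aⁿ : n ∈ ℕ}`, each eigenvalue has multiplicity one, and `(z - c)ⁿ`
is an eigenfunction for `aⁿ`. -/
theorem stmt14 (a c : ℂ) (hc : c ∈ ball (0:ℂ) 1) (ha0 : 0 < ‖a‖) (ha1 : ‖a‖ < 1)
    (hmap : ‖a‖ + ‖1 - a‖ * ‖c‖ ≤ 1)
    {F : Type*} [NormedAddCommGroup F] [InnerProductSpace ℂ F] [CompleteSpace F]
    (T : F →ₗ[ℂ] (ℂ → ℂ))
    (hinj : ∀ f g : F, (∀ z ∈ ball (0:ℂ) 1, T f z = T g z) → f = g)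
    (hmem : ∀ f : F, T f ∈ BergmanSpace)
    (hsur : ∀ g ∈ BergmanSpace, ∃ f : F, ∀ z ∈ ball (0:ℂ) 1, T f z = g z)
    (hnorm : ∀ f : F, ‖f‖ ^ 2 = ∫ z in ball (0:ℂ) 1, ‖T f z‖ ^ 2)
    (Cφ : F →L[ℂ] F)
    (hCφ : ∀ (f : F), ∀ z ∈ ball (0:ℂ) 1, T (Cφ f) z = T f (a * (z - c) + c)) :
    (∀ n : ℕ, ∃ en : F, (∀ z ∈ ball (0:ℂ) 1, T en z = (z - c) ^ n) ∧
        Cφ en = (a ^ n : ℂ) • en) ∧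
    (∀ μ : ℂ, (∃ f : F, f ≠ 0 ∧ Cφ f = μ • f) ↔ ∃ n : ℕ, μ = a ^ n) ∧
    (∀ (μ : ℂ) (f g : F), f ≠ 0 → g ≠ 0 → Cφ f = μ • f → Cφ g = μ • g →
      ∃ cst : ℂ, f = cst • g) :=
  stmt14_general a c hc ha0 ha1 hmap T hinj hmem hsur Cφ hCφ
end

section
/- Let φ(z) = (z + r)/(1 + r z) with 0 < r < 1 (a hyperbolic automorphism of 𝔻 fixing ±1), and set R = (1+r)/(1−r). For every w ∈ ℂ with R^{−1/2} < |R^w| < R^{1/2} (equivalently Re(w) ∈ (−1/2, 1/2)), the function e_w(z) = ((1+z)/(1−z))^w lies in the Bergman space L²_a(𝔻) and satisfies C_φ e_w = R^w e_w. -/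
/-!
With `u = (1 + z) / (1 - z)`, the Cayley transform maps the disk into the right half plane, so
`e_w = u ^ w` is holomorphic there. Since `|arg u| ≤ π`, for `|Re w| ≤ 1/2` we get
`|e_w|² ≤ C |u| ^ (2 Re w) ≤ C (|u| + |u|⁻¹) ≤ 2C (|z - 1|⁻¹ + |z + 1|⁻¹)`, and `|z - c|⁻¹` is
locally integrable in the plane. The eigenvalue identity holds because the Cayley transform
conjugates `φ` to multiplication by `R`, and `(R u) ^ w = R ^ w u ^ w` for `R > 0`.
-/

open MeasureTheory Metric

open Complex Real

lemma one_add_ne_zero_of_norm_lt_one {A : Type*} [NormedRing A] [NormOneClass A] {a : A}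
    (ha : ‖a‖ < 1) : 1 + a ≠ 0 := by
  intro h
  rw [eq_neg_of_add_eq_zero_right h, norm_neg, norm_one] at ha
  exact ha.false

lemma one_sub_ne_zero_of_norm_lt_one {A : Type*} [NormedRing A] [NormOneClass A] {a : A}
    (ha : ‖a‖ < 1) : 1 - a ≠ 0 := by
  simpa [sub_eq_add_neg] using one_add_ne_zero_of_norm_lt_one (a := -a) (by simpa)

lemma Real.rpow_le_add_inv {x a : ℝ} (hx : 0 < x) (ha : |a| ≤ 1) : x ^ a ≤ x + x⁻¹ := by
  rw [abs_le] at ha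
  rcases le_or_gt 1 x with h | h
  · calc x ^ a ≤ x ^ (1 : ℝ) := rpow_le_rpow_of_exponent_le h ha.2
      _ ≤ x + x⁻¹ := by rw [rpow_one]; linarith [inv_pos.2 hx]
  · calc x ^ a ≤ x ^ (-1 : ℝ) := rpow_le_rpow_of_exponent_ge hx h.le ha.1
      _ ≤ x + x⁻¹ := by rw [rpow_neg_one]; linarith

lemma Complex.norm_cpow_le_rpow_mul_exp (u w : ℂ) :
    ‖u ^ w‖ ≤ ‖u‖ ^ w.re * Real.exp (π * |w.im|) := by
  refine (norm_cpow_le u w).trans ?_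
  rw [div_eq_mul_inv, ← Real.exp_neg]
  gcongr
  calc -(arg u * w.im) ≤ |arg u| * |w.im| := by rw [← abs_mul]; exact neg_le_abs _
    _ ≤ π * |w.im| := by gcongr; exact abs_arg_le_pi u

lemma Complex.sq_norm_cpow_le {u w : ℂ} (hu : u ≠ 0) (hw : |w.re| ≤ 1 / 2) :
    ‖u ^ w‖ ^ 2 ≤ Real.exp (2 * π * |w.im|) * (‖u‖ + ‖u‖⁻¹) := by
  have h2w : (2 * w).re = 2 * w.re ∧ (2 * w).im = 2 * w.im := by simp
  rw [← norm_pow, ← cpow_nat_mul, Nat.cast_ofNat, mul_comm (Real.exp _)]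
  calc ‖u ^ (2 * w)‖ ≤ ‖u‖ ^ (2 * w).re * Real.exp (π * |(2 * w).im|) :=
        norm_cpow_le_rpow_mul_exp u _
    _ ≤ (‖u‖ + ‖u‖⁻¹) * Real.exp (2 * π * |w.im|) := by
        rw [h2w.1, h2w.2, abs_mul, abs_two, ← mul_assoc, mul_comm π 2]
        gcongr
        exact rpow_le_add_inv (norm_pos_iff.2 hu) (by rw [abs_mul, abs_two]; linarith)

lemma Complex.ofReal_mul_cpow {x : ℝ} (hx : 0 < x) {u : ℂ} (hu : u ≠ 0) (w : ℂ) :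
    ((x : ℂ) * u) ^ w = (x : ℂ) ^ w * u ^ w := by
  have hx' : (x : ℂ) ≠ 0 := ofReal_ne_zero.2 hx.ne'
  rw [cpow_def_of_ne_zero (mul_ne_zero hx' hu), cpow_def_of_ne_zero hx', cpow_def_of_ne_zero hu,
    log_ofReal_mul hx hu, add_mul, exp_add, ofReal_log hx.le]

lemma locallyIntegrable_norm_inv : LocallyIntegrable (fun z : ℂ => ‖z‖⁻¹) := by
  refine locallyIntegrable_of_norm_le_rpow (C := 1) (α := 1) (by simp) (by simp)
    (ae_of_all _ fun z => ?_) (by fun_prop)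
  simp [rpow_neg_one]

lemma locallyIntegrable_norm_sub_inv (c : ℂ) : LocallyIntegrable (fun z : ℂ => ‖z - c‖⁻¹) := by
  have := (locallyIntegrable_map_homeomorph (μ := volume) (Homeomorph.addRight (-c))).1
    (by rw [Homeomorph.coe_addRight, map_add_right_eq_self]; exact locallyIntegrable_norm_inv)
  simpa [Function.comp_def, ← sub_eq_add_neg] using this

lemma cayley_comp_eq_mul {K : Type*} [Field K] {r z : K} (hrz : 1 + r * z ≠ 0) :
    (1 + (z + r) / (1 + r * z)) / (1 - (z + r) / (1 + r * z)) =
      (1 + r) / (1 - r) * ((1 + z) / (1 - z)) := by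
  rw [one_add_div hrz, one_sub_div hrz, div_div_div_cancel_right₀ hrz, div_mul_div_comm]
  congr 1 <;> ring

lemma re_cayley_pos {z : ℂ} (hz : ‖z‖ < 1) : 0 < ((1 + z) / (1 - z)).re := by
  have hnum : (1 + z).re * (1 - z).re + (1 + z).im * (1 - z).im = 1 - ‖z‖ ^ 2 := by
    rw [Complex.sq_norm, normSq_apply]
    simp only [add_re, one_re, sub_re, add_im, one_im, zero_add, sub_im, zero_sub, mul_neg]
    ring
  rw [div_re, ← add_div, hnum]
  exact div_pos (by nlinarith [norm_nonneg z])
    (normSq_pos.2 (one_sub_ne_zero_of_norm_lt_one hz))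

lemma norm_cayley_add_inv_le {z : ℂ} (hz : ‖z‖ < 1) :
    ‖(1 + z) / (1 - z)‖ + ‖(1 + z) / (1 - z)‖⁻¹ ≤ 2 * (‖z - 1‖⁻¹ + ‖z + 1‖⁻¹) := by
  rw [norm_div, inv_div, norm_sub_rev, add_comm 1 z, div_eq_mul_inv, div_eq_mul_inv, mul_add]
  have hp : ‖z + 1‖ ≤ 2 := (norm_add_le _ _).trans (by rw [norm_one]; linarith)
  have hm : ‖z - 1‖ ≤ 2 := (norm_sub_le _ _).trans (by rw [norm_one]; linarith)
  gcongr

lemma cayley_ne_zero {z : ℂ} (hz : ‖z‖ < 1) : (1 + z) / (1 - z) ≠ 0 :=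
  div_ne_zero (one_add_ne_zero_of_norm_lt_one hz) (one_sub_ne_zero_of_norm_lt_one hz)

lemma differentiableOn_cayley_cpow (w : ℂ) :
    DifferentiableOn ℂ (fun z : ℂ => ((1 + z) / (1 - z)) ^ w) (ball 0 1) := by
  intro z hz
  rw [mem_ball_zero_iff] at hz
  have hdiv : DifferentiableAt ℂ (fun z : ℂ => (1 + z) / (1 - z)) z :=
    (differentiableAt_id.const_add 1).div (differentiableAt_id.const_sub 1)
      (one_sub_ne_zero_of_norm_lt_one hz)
  exact (hdiv.cpow_const (Or.inl (re_cayley_pos hz))).differentiableWithinAt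

theorem cayley_cpow_mem_bergmanSpace {w : ℂ} (hw : |w.re| ≤ 1 / 2) :
    (fun z : ℂ => ((1 + z) / (1 - z)) ^ w) ∈ BergmanSpace := by
  have hdiff := differentiableOn_cayley_cpow w
  refine ⟨hdiff, ?_⟩
  have hdom : IntegrableOn
      (fun z : ℂ => Real.exp (2 * π * |w.im|) * (2 * (‖z - 1‖⁻¹ + ‖z + 1‖⁻¹))) (ball 0 1) := by
    have hsing (c : ℂ) : IntegrableOn (fun z : ℂ => ‖z - c‖⁻¹) (ball 0 1) :=
      ((locallyIntegrable_norm_sub_inv c).integrableOn_isCompact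
        (isCompact_closedBall 0 1)).mono_set ball_subset_closedBall
    simpa [IntegrableOn] using
      ((hsing 1).add (hsing (-1))).const_mul 2 |>.const_mul (Real.exp (2 * π * |w.im|))
  refine hdom.mono' ((hdiff.continuousOn.norm.pow 2).aestronglyMeasurable measurableSet_ball) ?_
  refine (ae_restrict_iff' measurableSet_ball).2 (ae_of_all _ fun z hz => ?_)
  rw [mem_ball_zero_iff] at hz
  rw [Real.norm_of_nonneg (by positivity)]
  exact (sq_norm_cpow_le (cayley_ne_zero hz) hw).trans (by gcongr; exact norm_cayley_add_inv_le hz)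

/-- For the hyperbolic automorphism `φ(z) = (z+r)/(1+rz)`, `0 < r < 1`, with
`R = (1+r)/(1-r)`, and `Re w ∈ (-1/2, 1/2)`, the function
`e_w(z) = ((1+z)/(1-z))^w` lies in the Bergman space and satisfies
`e_w ∘ φ = R^w e_w`. -/
theorem stmt16 (r : ℝ) (hr0 : 0 < r) (hr1 : r < 1) (w : ℂ)
    (hw1 : -(1 / 2 : ℝ) < w.re) (hw2 : w.re < (1 / 2 : ℝ)) :
    (fun z : ℂ => ((1 + z) / (1 - z)) ^ w) ∈ BergmanSpace ∧
    ∀ z ∈ ball (0:ℂ) 1,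
      ((1 + (z + (r : ℂ)) / (1 + (r : ℂ) * z)) /
        (1 - (z + (r : ℂ)) / (1 + (r : ℂ) * z))) ^ w
        = ((((1 + r) / (1 - r) : ℝ)) : ℂ) ^ w * ((1 + z) / (1 - z)) ^ w := by
  refine ⟨cayley_cpow_mem_bergmanSpace (abs_le.2 ⟨by linarith, by linarith⟩), fun z hz => ?_⟩
  rw [mem_ball_zero_iff] at hz
  have hrz : ‖(r : ℂ) * z‖ < 1 := by
    rw [norm_mul, norm_real, Real.norm_of_nonneg hr0.le]
    nlinarith [norm_nonneg z]
  rw [cayley_comp_eq_mul (one_add_ne_zero_of_norm_lt_one hrz),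
    ← ofReal_mul_cpow (div_pos (by linarith) (by linarith)) (cayley_ne_zero hz)]
  push_cast
  rfl
end

section
/- Let φ(z) = ((2−a)z + a)/(−a z + 2 + a) with a ∈ ℂ, Re(a) = 0, a ≠ 0 (a parabolic automorphism of 𝔻 fixing 1). For every t ≥ 0 the function e_t(z) = exp(−t (1+z)/(1−z)) lies in the Bergman space L²_a(𝔻), is bounded on 𝔻, and satisfies C_φ e_t = e^{−a t} e_t; in particular every eigenvalue e^{−at} is unimodular. -/
open MeasureTheory Metric

/-!
The Cayley transform `z ↦ (1 + z)/(1 - z)` maps the disk onto the right half-plane, so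
`e_t = exp(-t · cayley)` has modulus at most `1` for `t ≥ 0`; being bounded and holomorphic on a
set of finite area, it is in the Bergman space. Conjugated by the Cayley transform, `φ` becomes the
translation `w ↦ w + a`, whence `e_t ∘ φ = e^{-at} e_t`, and `|e^{-at}| = 1` because `Re a = 0`.
-/

theorem mem_bergmanSpace_of_norm_le {f : ℂ → ℂ} (hf : DifferentiableOn ℂ f (ball 0 1))
    {C : ℝ} (hC : ∀ z ∈ ball (0 : ℂ) 1, ‖f z‖ ≤ C) : f ∈ BergmanSpace := by
  refine ⟨hf, .of_bound measure_ball_lt_top ?_ (C ^ 2) ?_⟩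
  · exact (hf.continuousOn.norm.pow 2).aestronglyMeasurable measurableSet_ball
  · filter_upwards [ae_restrict_mem measurableSet_ball] with z hz
    rw [norm_pow, norm_norm]
    exact pow_le_pow_left₀ (norm_nonneg _) (hC z hz) 2

theorem one_sub_ne_zero_of_mem_ball {z : ℂ} (hz : z ∈ ball (0 : ℂ) 1) : 1 - z ≠ 0 := by
  rw [sub_ne_zero]
  rintro rfl
  simp at hz

theorem re_one_add_div_one_sub_pos {z : ℂ} (hz : z ∈ ball (0 : ℂ) 1) :
    0 < ((1 + z) / (1 - z)).re := by
  have hz2 : z.re * z.re + z.im * z.im < 1 := by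
    rw [mem_ball_zero_iff, ← sq_lt_one_iff₀ (norm_nonneg z), ← Complex.normSq_eq_norm_sq,
      Complex.normSq_apply] at hz
    exact hz
  have hden : 0 < Complex.normSq (1 - z) :=
    Complex.normSq_pos.mpr (one_sub_ne_zero_of_mem_ball hz)
  rw [Complex.div_re, ← add_div]
  refine div_pos ?_ hden
  simp only [Complex.add_re, Complex.add_im, Complex.sub_re, Complex.sub_im, Complex.one_re,
    Complex.one_im]
  nlinarith

theorem differentiableOn_exp_mul_one_add_div_one_sub (c : ℂ) :
    DifferentiableOn ℂ (fun z : ℂ => Complex.exp (c * (1 + z) / (1 - z))) (ball 0 1) :=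
  ((((differentiable_const 1).add differentiable_id).const_mul c).differentiableOn.div
    ((differentiable_const 1).sub differentiable_id).differentiableOn
    fun _ hz => one_sub_ne_zero_of_mem_ball hz).cexp

theorem norm_exp_neg_mul_one_add_div_one_sub_le_one {t : ℝ} (ht : 0 ≤ t) {z : ℂ}
    (hz : z ∈ ball (0 : ℂ) 1) : ‖Complex.exp (-(t : ℂ) * (1 + z) / (1 - z))‖ ≤ 1 := by
  rw [Complex.norm_exp, Real.exp_le_one_iff, mul_div_assoc, neg_mul, Complex.neg_re,
    Complex.re_ofReal_mul, neg_nonpos]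
  exact mul_nonneg ht (re_one_add_div_one_sub_pos hz).le

theorem neg_mul_add_two_add_ne_zero {a : ℂ} (ha : a.re = 0) {z : ℂ} (hz : z ∈ ball (0 : ℂ) 1) :
    -a * z + 2 + a ≠ 0 := by
  have h2a : ‖a‖ < ‖2 + a‖ := by
    rw [← sq_lt_sq₀ (norm_nonneg _) (norm_nonneg _), ← Complex.normSq_eq_norm_sq,
      ← Complex.normSq_eq_norm_sq, Complex.normSq_apply, Complex.normSq_apply]
    simp only [Complex.add_re, Complex.add_im, ha]
    norm_num
  intro h
  have haz : a * z = 2 + a := by linear_combination -h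
  have : ‖a * z‖ < ‖2 + a‖ := by
    rw [norm_mul]
    exact lt_of_le_of_lt (mul_le_of_le_one_right (norm_nonneg a)
      (mem_ball_zero_iff.mp hz).le) h2a
  exact this.ne (congrArg norm haz)

theorem one_add_div_one_sub_parabolic {a z : ℂ} (hD : -a * z + 2 + a ≠ 0) (hz : 1 - z ≠ 0) :
    (1 + ((2 - a) * z + a) / (-a * z + 2 + a)) / (1 - ((2 - a) * z + a) / (-a * z + 2 + a))
      = (1 + z) / (1 - z) + a := by
  have hnum : -a * z + 2 + a - ((2 - a) * z + a) ≠ 0 := by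
    rw [show -a * z + 2 + a - ((2 - a) * z + a) = 2 * (1 - z) by ring]
    exact mul_ne_zero two_ne_zero hz
  rw [one_sub_div hD, one_add_div hD, div_div_div_cancel_right₀ hD, div_add' _ _ _ hz,
    div_eq_div_iff hnum hz]
  ring

theorem norm_exp_mul_ofReal_eq_one {a : ℂ} (ha : a.re = 0) (t : ℝ) :
    ‖Complex.exp (a * t)‖ = 1 := by
  rw [Complex.norm_exp, Complex.re_mul_ofReal, ha, zero_mul, Real.exp_zero]

theorem stmt19_general (a : ℂ) (ha : a.re = 0) (t : ℝ) (ht : 0 ≤ t) :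
    (fun z : ℂ => Complex.exp (-(t : ℂ) * (1 + z) / (1 - z))) ∈ BergmanSpace ∧
    (∀ z ∈ ball (0:ℂ) 1, ‖Complex.exp (-(t : ℂ) * (1 + z) / (1 - z))‖ ≤ 1) ∧
    (∀ z ∈ ball (0:ℂ) 1,
      Complex.exp (-(t : ℂ) *
          (1 + ((2 - a) * z + a) / (-a * z + 2 + a)) /
          (1 - ((2 - a) * z + a) / (-a * z + 2 + a)))
        = Complex.exp (-a * t) * Complex.exp (-(t : ℂ) * (1 + z) / (1 - z))) ∧
    ‖Complex.exp (-a * t)‖ = 1 := by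
  have hbound := fun z (hz : z ∈ ball (0 : ℂ) 1) =>
    norm_exp_neg_mul_one_add_div_one_sub_le_one ht hz
  refine ⟨mem_bergmanSpace_of_norm_le (differentiableOn_exp_mul_one_add_div_one_sub _) hbound,
    hbound, fun z hz => ?_, norm_exp_mul_ofReal_eq_one (by simp [ha]) t⟩
  rw [mul_div_assoc, one_add_div_one_sub_parabolic (neg_mul_add_two_add_ne_zero ha hz)
    (one_sub_ne_zero_of_mem_ball hz), ← Complex.exp_add]
  congr 1
  ring

/-- For the parabolic automorphism `φ(z) = ((2-a)z + a)/(-az + 2 + a)` with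
`Re a = 0`, `a ≠ 0`, and `t ≥ 0`, the function
`e_t(z) = exp(-t(1+z)/(1-z))` belongs to the Bergman space, is bounded by `1`
on the disk, and satisfies `e_t ∘ φ = e^{-at} e_t` with `|e^{-at}| = 1`. -/
theorem stmt19 (a : ℂ) (ha : a.re = 0) (ha0 : a ≠ 0) (t : ℝ) (ht : 0 ≤ t) :
    (fun z : ℂ => Complex.exp (-(t : ℂ) * (1 + z) / (1 - z))) ∈ BergmanSpace ∧
    (∀ z ∈ ball (0:ℂ) 1, ‖Complex.exp (-(t : ℂ) * (1 + z) / (1 - z))‖ ≤ 1) ∧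
    (∀ z ∈ ball (0:ℂ) 1,
      Complex.exp (-(t : ℂ) *
          (1 + ((2 - a) * z + a) / (-a * z + 2 + a)) /
          (1 - ((2 - a) * z + a) / (-a * z + 2 + a)))
        = Complex.exp (-a * t) * Complex.exp (-(t : ℂ) * (1 + z) / (1 - z))) ∧
    ‖Complex.exp (-a * t)‖ = 1 :=
  stmt19_general a ha t ht
end
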